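/- arXiv:2002.09651 — 3 statements merged into one kernel-verified Lean document; each statement's English description precedes it below -/
import Mathlib

section
/- Let X be a Polish space, E and F countable Borel equivalence relations on X such that every E-class is properly contained in an F-class, and let μ be an E-ergodic, F-quasi-invariant Borel probability measure on X. Then for every Borel set B ⊆ X, for μ-almost every x ∈ B, the (E restricted to B)-class of x is properly contained in an (F restricted to B)-class. -/
/-!
The set `Z` of points `x` having some `y ∈ B` with `x F y` but not `x E y` is `E`-invariant, and
as the projection of a Borel set it is analytic, hence `μ`-measurable (analytic sets are
approximated from inside by compact sets). Iterating `F`-saturations of null sets, which stay null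
by quasi-invariance, shows that `Z` agrees a.e. with an `E`-invariant Borel set, so ergodicity
gives `μ Z = 0` or `μ Zᶜ = 0`. In the second case we are done. In the first, every `x ∈ B` has a
`y` with `x F y` but not `x E y`, and `x` itself witnesses `y ∈ Z`; so `B` lies in the
`F`-saturation of a null set and is null.
-/

open MeasureTheory Set Filter Topology
open scoped ENNReal

theorem exists_seq_forall_bounded_prefix {Φ : Set (ℕ → ℕ) → Prop} (h₀ : Φ univ)
    (hstep : ∀ S n, Φ S → ∃ k, Φ (S ∩ {x | x n ≤ k})) :
    ∃ s : ℕ → ℕ, ∀ n, Φ {x | ∀ i < n, x i ≤ s i} := by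
  choose k hk using fun S n => (Classical.em (Φ S)).elim
    (fun h => (hstep S n h).imp fun _ hk _ => hk) (fun h => ⟨0, fun h' => absurd h' h⟩)
  let S : ℕ → Set (ℕ → ℕ) := fun n => Nat.rec univ (fun n S => S ∩ {x | x n ≤ k S n}) n
  have hS : ∀ n, S n = {x | ∀ i < n, x i ≤ k (S i) i} ∧ Φ (S n) := by
    intro n
    induction n with
    | zero => simpa [S] using h₀
    | succ n ih =>
      refine ⟨?_, hk (S n) n ih.2⟩
      change S n ∩ _ = _
      rw [ih.1]
      ext x
      simp only [mem_inter_iff, mem_ofPred_eq, Nat.lt_succ_iff_lt_or_eq, or_imp, forall_and,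
        forall_eq]
      rfl
  exact ⟨fun n => k (S n) n, fun n => (hS n).1 ▸ (hS n).2⟩

theorem isCompact_setOf_forall_le (s : ℕ → ℕ) : IsCompact {x : ℕ → ℕ | ∀ i, x i ≤ s i} := by
  simpa only [Set.pi, mem_univ, true_imp_iff, mem_Iic] using
    isCompact_univ_pi fun i => (finite_Iic (s i)).isCompact

theorem iInter_closure_image_bounded_prefix_subset {X : Type*} [TopologicalSpace X]
    [TopologicalSpace.MetrizableSpace X] {f : (ℕ → ℕ) → X} (hf : Continuous f) (s : ℕ → ℕ) :
    ⋂ n, closure (f '' {x | ∀ i < n, x i ≤ s i}) ⊆ f '' {x | ∀ i, x i ≤ s i} := by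
  let := TopologicalSpace.metrizableSpaceMetric X
  intro z hz
  have hxn : ∀ n : ℕ, ∃ x, (∀ i < n, x i ≤ s i) ∧ dist z (f x) < 1 / (n + 1) := by
    intro n
    obtain ⟨_, ⟨x, hx, rfl⟩, hxz⟩ :=
      Metric.mem_closure_iff.1 (mem_iInter.1 hz n) (1 / (n + 1)) (by positivity)
    exact ⟨x, hx, hxz⟩
  choose x hxs hxz using hxn
  have hK := isCompact_setOf_forall_le s
  -- Truncating `x n` at `s` changes none of its first `n` coordinates.
  obtain ⟨a, haK, φ, hφ, hφa⟩ := hK.tendsto_subseq (x := fun n i => min (x n i) (s i))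
    fun n i => min_le_right _ _
  have hxa : Tendsto (fun k => x (φ k)) atTop (𝓝 a) := by
    refine tendsto_pi_nhds.2 fun i => (tendsto_pi_nhds.1 hφa i).congr' ?_
    filter_upwards [eventually_gt_atTop i] with k hk
    exact min_eq_left (hxs _ i (hk.trans_le (hφ.le_apply)))
  have hxz' : Tendsto (fun k => f (x (φ k))) atTop (𝓝 z) := by
    refine tendsto_iff_dist_tendsto_zero.2 (squeeze_zero (fun _ => dist_nonneg) (fun k => ?_)
      tendsto_one_div_add_atTop_nhds_zero_nat)
    rw [dist_comm]
    refine (hxz (φ k)).le.trans (one_div_le_one_div_of_le (by positivity) ?_)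
    exact_mod_cast Nat.add_le_add_right hφ.le_apply 1
  exact ⟨a, haK, tendsto_nhds_unique ((hf.tendsto a).comp hxa) hxz'⟩

section Capacitability

variable {X : Type*} [TopologicalSpace X] [TopologicalSpace.MetrizableSpace X]
  [MeasurableSpace X] [OpensMeasurableSpace X] {μ : Measure X} [IsFiniteMeasure μ]

theorem exists_isCompact_subset_range_le_measure {f : (ℕ → ℕ) → X} (hf : Continuous f)
    {t : ℝ≥0∞} (ht : t < μ (range f)) : ∃ K, IsCompact K ∧ K ⊆ range f ∧ t ≤ μ K := by
  obtain ⟨s, hs⟩ : ∃ s : ℕ → ℕ, ∀ n, t < μ (f '' {x | ∀ i < n, x i ≤ s i}) := by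
    refine exists_seq_forall_bounded_prefix (Φ := fun S => t < μ (f '' S))
      (by rwa [image_univ]) fun S n hS => ?_
    have hmono : Monotone fun k : ℕ => f '' (S ∩ {x | x n ≤ k}) := fun a b hab =>
      image_mono (inter_subset_inter_right _ fun x hx => le_trans hx hab)
    have hunion : ⋃ k : ℕ, f '' (S ∩ {x | x n ≤ k}) = f '' S := by
      rw [← image_iUnion, ← inter_iUnion]
      exact congrArg _ (inter_eq_left.2 fun x _ => mem_iUnion.2 ⟨x n, le_refl (x n)⟩)
    rw [← hunion, hmono.measure_iUnion] at hS
    exact lt_iSup_iff.1 hS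
  refine ⟨f '' {x | ∀ i, x i ≤ s i}, (isCompact_setOf_forall_le s).image hf, image_subset_range _ _, ?_⟩
  have hanti : Antitone fun n => closure (f '' {x | ∀ i < n, x i ≤ s i}) :=
    fun m n hmn => closure_mono (image_mono fun x hx i hi => hx i (hi.trans_le hmn))
  calc t ≤ ⨅ n, μ (closure (f '' {x | ∀ i < n, x i ≤ s i})) :=
        le_iInf fun n => (hs n).le.trans (measure_mono subset_closure)
    _ = μ (⋂ n, closure (f '' {x | ∀ i < n, x i ≤ s i})) :=
        (hanti.measure_iInter (fun n => isClosed_closure.nullMeasurableSet)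
          ⟨0, measure_ne_top μ _⟩).symm
    _ ≤ μ (f '' {x | ∀ i, x i ≤ s i}) :=
        measure_mono (iInter_closure_image_bounded_prefix_subset hf s)

theorem MeasureTheory.AnalyticSet.nullMeasurableSet {s : Set X} (hs : AnalyticSet s) :
    NullMeasurableSet s μ := by
  rw [AnalyticSet] at hs
  obtain rfl | ⟨f, hf, rfl⟩ := hs
  · exact nullMeasurableSet_empty
  obtain h₀ | h₀ := eq_zero_or_pos (μ (range f))
  · exact NullMeasurableSet.of_null h₀
  obtain ⟨u, -, hu, hu_lim⟩ := exists_seq_strictMono_tendsto' h₀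
  choose K hKc hKf hKu using fun n =>
    exists_isCompact_subset_range_le_measure (μ := μ) hf (hu n).2
  have hM : MeasurableSet (⋃ n, K n) := .iUnion fun n => (hKc n).isClosed.measurableSet
  have hMf : ⋃ n, K n ⊆ range f := iUnion_subset hKf
  have hμM : μ (⋃ n, K n) = μ (range f) := le_antisymm (measure_mono hMf)
    (le_of_tendsto' hu_lim fun n => (hKu n).trans (measure_mono (subset_iUnion K n)))
  have hdiff : μ (range f \ ⋃ n, K n) = 0 := by
    have h := measure_inter_add_sdiff (μ := μ) (range f) hM
    rw [inter_eq_right.2 hMf, hμM] at h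
    exact (ENNReal.add_right_inj (measure_ne_top μ _)).1 (h.trans (add_zero _).symm)
  rw [← union_sdiff_cancel hMf]
  exact hM.nullMeasurableSet.union (NullMeasurableSet.of_null hdiff)

end Capacitability

def IsInvariantUnder {X : Type*} (R : X → X → Prop) (s : Set X) : Prop :=
  ∀ x y, x ∈ s → R x y → y ∈ s

section Invariant

variable {X : Type*} [MeasurableSpace X] {R : X → X → Prop} {μ : Measure X}

theorem exists_measurableSet_invariant_null_superset
    (hqi : ∀ A : Set X, MeasurableSet A → μ A = 0 → μ {y | ∃ x ∈ A, R x y} = 0)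
    {A : Set X} (hA : μ A = 0) :
    ∃ N, A ⊆ N ∧ MeasurableSet N ∧ μ N = 0 ∧ IsInvariantUnder R N := by
  let N : ℕ → Set X := fun n =>
    Nat.rec (toMeasurable μ A) (fun _ S => toMeasurable μ {y | ∃ x ∈ S, R x y}) n
  have hN : ∀ n, MeasurableSet (N n) ∧ μ (N n) = 0 := by
    intro n
    induction n with
    | zero => exact ⟨measurableSet_toMeasurable _ _, (measure_toMeasurable A).trans hA⟩
    | succ n ih => exact ⟨measurableSet_toMeasurable _ _,
        (measure_toMeasurable _).trans (hqi _ ih.1 ih.2)⟩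
  refine ⟨⋃ n, N n, (subset_toMeasurable μ A).trans (subset_iUnion N 0),
    .iUnion fun n => (hN n).1, measure_iUnion_null fun n => (hN n).2, fun x y hx hxy => ?_⟩
  obtain ⟨n, hn⟩ := mem_iUnion.1 hx
  exact mem_iUnion.2 ⟨n + 1, subset_toMeasurable μ _ ⟨x, hn, hxy⟩⟩

theorem exists_measurableSet_invariant_ae_eq
    (hqi : ∀ A : Set X, MeasurableSet A → μ A = 0 → μ {y | ∃ x ∈ A, R x y} = 0)
    {Z : Set X} (hZ : NullMeasurableSet Z μ) (hZinv : IsInvariantUnder R Z) :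
    ∃ T, MeasurableSet T ∧ IsInvariantUnder R T ∧ T =ᵐ[μ] Z := by
  obtain ⟨M, hMZ, hM, hMae⟩ := hZ.exists_measurable_subset_ae_eq
  obtain ⟨N, hZMN, hN, hN0, hNinv⟩ := exists_measurableSet_invariant_null_superset hqi
    ((ae_eq_set.1 hMae).2)
  refine ⟨M ∪ N, hM.union hN, ?_, ae_eq_set.2 ⟨measure_mono_null ?_ hN0, ?_⟩⟩
  · rintro x y (hx | hx) hxy
    · by_cases hyM : y ∈ M
      · exact Or.inl hyM
      · exact Or.inr (hZMN ⟨hZinv x y (hMZ hx) hxy, hyM⟩)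
    · exact Or.inr (hNinv x y hx hxy)
  · rintro x ⟨hx | hx, hxZ⟩
    exacts [absurd (hMZ hx) hxZ, hx]
  · rw [sdiff_eq_empty.2 fun x hx => ?_, measure_empty]
    by_cases hxM : x ∈ M
    exacts [Or.inl hxM, Or.inr (hZMN ⟨hx, hxM⟩)]

theorem measure_eq_zero_or_compl_of_invariant_nullMeasurableSet
    (herg : ∀ B : Set X, MeasurableSet B → IsInvariantUnder R B → μ B = 0 ∨ μ Bᶜ = 0)
    (hqi : ∀ A : Set X, MeasurableSet A → μ A = 0 → μ {y | ∃ x ∈ A, R x y} = 0)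
    {Z : Set X} (hZ : NullMeasurableSet Z μ) (hZinv : IsInvariantUnder R Z) :
    μ Z = 0 ∨ μ Zᶜ = 0 := by
  obtain ⟨T, hT, hTinv, hTZ⟩ := exists_measurableSet_invariant_ae_eq hqi hZ hZinv
  rw [← measure_congr hTZ, ← measure_congr hTZ.compl]
  exact herg T hT hTinv

end Invariant

theorem stmt_9_general {X : Type*} [TopologicalSpace X] [PolishSpace X]
    [MeasurableSpace X] [BorelSpace X]
    (E F : X → X → Prop) (hEeq : Equivalence E) (hFeq : Equivalence F)
    (hEmeas : MeasurableSet {p : X × X | E p.1 p.2})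
    (hFmeas : MeasurableSet {p : X × X | F p.1 p.2})
    (hEF : ∀ x y, E x y → F x y)
    (hproper : ∀ x : X, ∃ y, F x y ∧ ¬ E x y)
    (μ : Measure X) [IsProbabilityMeasure μ]
    (herg : ∀ B : Set X, MeasurableSet B → (∀ x y, x ∈ B → E x y → y ∈ B) →
      μ B = 0 ∨ μ Bᶜ = 0)
    (hqi : ∀ A : Set X, MeasurableSet A → μ A = 0 → μ {y | ∃ x ∈ A, F x y} = 0)
    (B : Set X) (hB : MeasurableSet B) :
    ∀ᵐ x ∂μ, x ∈ B → ∃ y ∈ B, F x y ∧ ¬ E x y := by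
  set Z := {x | ∃ y ∈ B, F x y ∧ ¬ E x y}
  have hZ : NullMeasurableSet Z μ := by
    have hZP : Z = Prod.fst '' {p : X × X | p.2 ∈ B ∧ F p.1 p.2 ∧ ¬ E p.1 p.2} := by
      ext x
      simp [Z]
    rw [hZP]
    exact ((measurable_snd hB).inter (hFmeas.inter hEmeas.compl)).analyticSet
      |>.image_of_continuous continuous_fst |>.nullMeasurableSet
  have hZinv : IsInvariantUnder E Z := fun x x' ⟨y, hyB, hxy, hnxy⟩ hxx' =>
    ⟨y, hyB, hFeq.trans (hFeq.symm (hEF x x' hxx')) hxy, fun h => hnxy (hEeq.trans hxx' h)⟩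
  have hqiE : ∀ A : Set X, MeasurableSet A → μ A = 0 → μ {y | ∃ x ∈ A, E x y} = 0 :=
    fun A hA h0 => measure_mono_null
      (ofPred_subset_ofPred.2 fun y ⟨x, hx, hxy⟩ => ⟨x, hx, hEF x y hxy⟩) (hqi A hA h0)
  obtain hZ0 | hZc0 := measure_eq_zero_or_compl_of_invariant_nullMeasurableSet herg hqiE hZ hZinv
  · have hBZ : B ⊆ {y | ∃ x ∈ toMeasurable μ Z, F x y} := fun x hxB => by
      obtain ⟨y, hxy, hnxy⟩ := hproper x
      exact ⟨y, subset_toMeasurable μ Z ⟨x, hxB, hFeq.symm hxy, fun h => hnxy (hEeq.symm h)⟩,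
        hFeq.symm hxy⟩
    have hB0 := measure_mono_null hBZ (hqi _ (measurableSet_toMeasurable μ Z)
      ((measure_toMeasurable Z).trans hZ0))
    exact (measure_eq_zero_iff_ae_notMem.1 hB0).mono fun x hx hxB => absurd hxB hx
  · exact (measure_eq_zero_iff_ae_notMem.1 hZc0).mono fun x hx _ => not_not.1 hx

/-- If every `E`-class is properly contained in an `F`-class and `μ` is
`E`-ergodic and `F`-quasi-invariant, then for every Borel `B`, almost every point of `B`
has its `(E↾B)`-class properly contained in an `(F↾B)`-class. -/
theorem stmt_9 {X : Type*} [TopologicalSpace X] [PolishSpace X]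
    [MeasurableSpace X] [BorelSpace X]
    (E F : X → X → Prop) (hEeq : Equivalence E) (hFeq : Equivalence F)
    (hEmeas : MeasurableSet {p : X × X | E p.1 p.2})
    (hFmeas : MeasurableSet {p : X × X | F p.1 p.2})
    (hEcount : ∀ x : X, {y | E x y}.Countable)
    (hFcount : ∀ x : X, {y | F x y}.Countable)
    (hEF : ∀ x y, E x y → F x y)
    (hproper : ∀ x : X, ∃ y, F x y ∧ ¬ E x y)
    (μ : Measure X) [IsProbabilityMeasure μ]
    (herg : ∀ B : Set X, MeasurableSet B → (∀ x y, x ∈ B → E x y → y ∈ B) →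
      μ B = 0 ∨ μ Bᶜ = 0)
    (hqi : ∀ A : Set X, MeasurableSet A → μ A = 0 → μ {y | ∃ x ∈ A, F x y} = 0)
    (B : Set X) (hB : MeasurableSet B) :
    ∀ᵐ x ∂μ, x ∈ B → ∃ y ∈ B, F x y ∧ ¬ E x y :=
  stmt_9_general E F hEeq hFeq hEmeas hFmeas hEF hproper μ herg hqi B hB
end

section
/- Let X be a Polish space, E a countable Borel equivalence relation on X, μ an E-ergodic Borel probability measure, and F a countable Borel equivalence relation on a Polish space Y. Then E is μ-reducible to F if and only if E is μ-somewhere reducible to F (i.e., there is a μ-positive Borel set on which there is a Borel reduction of E to F). -/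
/-!
If `f` reduces `E` to `F` on a `μ`-positive Borel set `C`, pull it back along a Borel map `t`
sending each point of the saturation `[C]_E` to an `E`-equivalent point of `C`: then `f ∘ t`
reduces `E` to `F` on the saturation. Such a `t` exists off a null set by measurable
uniformization. The set `{(y, x) | x ∈ C, E x y}` is analytic, the image of Baire space under a
continuous `h`. Replace the image under `h` of the sequences extending each finite sequence `l`
by a Borel subset of full measure (capacitability); then the leftmost branch through these Borel
pieces is a Borel function of `y` and selects a point of the fibre. Discarding the `E`-saturation of the exceptional null set,
itself null by quasi-invariance, leaves an `E`-invariant Borel set of positive measure, which is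
conull by ergodicity.
-/

open MeasureTheory Set Filter Topology ENNReal

section

variable {α : Type*}

theorem iInter_closure_image_subset_image [TopologicalSpace α] [T2Space α]
    [FirstCountableTopology α]
    {g : (ℕ → ℕ) → α} (hg : Continuous g) {F : Set (ℕ → ℕ)} (hF : IsClosed F)
    {S : ℕ → Set (ℕ → ℕ)} (hSF : ∀ n, S n ⊆ F) (b : ℕ → ℕ)
    (hb : ∀ n, ∀ σ ∈ S n, ∀ i < n, σ i ≤ b i) :
    ⋂ n, closure (g '' S n) ⊆ g '' F := by
  intro x hx
  obtain ⟨U, hU⟩ := (𝓝 x).exists_antitone_basis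
  have hseq : ∀ n, ∃ σ ∈ S n, g σ ∈ U n := fun n => by
    obtain ⟨_, hxU, σ, hσ, rfl⟩ :=
      mem_closure_iff_nhds.1 (mem_iInter.1 hx n) (U n) (hU.mem n)
    exact ⟨σ, hσ, hxU⟩
  choose σ hσS hσU using hseq
  have hfin : ∀ i, (range fun n => σ n i).Finite := fun i =>
    (((finite_Iic i).image fun n => σ n i).union (finite_Iic (b i))).subset <| by
      rintro _ ⟨n, rfl⟩
      rcases le_or_gt n i with hn | hn
      · exact Or.inl ⟨n, hn, rfl⟩
      · exact Or.inr (hb n _ (hσS n) i hn)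
  obtain ⟨τ, -, φ, hφ, hlim⟩ := (isCompact_univ_pi fun i => (hfin i).isCompact).tendsto_subseq
    (x := σ) fun n i _ => mem_range_self n
  have hgσ : Tendsto (fun k => g (σ (φ k))) atTop (𝓝 x) :=
    (hU.tendsto hσU).comp hφ.tendsto_atTop
  exact ⟨τ, hF.mem_of_tendsto hlim (Eventually.of_forall fun k => hSF _ (hσS _)),
    tendsto_nhds_unique ((hg.tendsto τ).comp hlim) hgσ⟩

theorem exists_measure_image_le_inter_add [MeasurableSpace α] (μ : Measure α)
    [IsFiniteMeasure μ] (g : (ℕ → ℕ) → α) (S : Set (ℕ → ℕ)) (n : ℕ) {δ : ℝ≥0∞} (hδ : δ ≠ 0) :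
    ∃ m, μ (g '' S) ≤ μ (g '' (S ∩ {σ | σ n ≤ m})) + δ := by
  have hmono : Monotone fun m => g '' (S ∩ {σ | σ n ≤ m}) := fun m m' hm =>
    image_mono <| inter_subset_inter_right _ fun σ hσ => le_trans hσ hm
  have hunion : g '' S = ⋃ m, g '' (S ∩ {σ | σ n ≤ m}) := by
    have hcover : ⋃ m, {σ : ℕ → ℕ | σ n ≤ m} = univ :=
      eq_univ_of_forall fun σ => mem_iUnion.2 ⟨σ n, le_refl (σ n)⟩
    rw [← image_iUnion, ← inter_iUnion, hcover, inter_univ]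
  have hlt : μ (g '' S) < ⨆ m, (μ (g '' (S ∩ {σ | σ n ≤ m})) + δ) := by
    rw [← ENNReal.iSup_add, ← hmono.measure_iUnion, ← hunion]
    exact ENNReal.lt_add_right (measure_ne_top μ _) hδ
  obtain ⟨m, hm⟩ := lt_iSup_iff.1 hlt
  exact ⟨m, hm.le⟩

theorem exists_measurableSet_subset_image_measure_diff_le [TopologicalSpace α] [T2Space α]
    [FirstCountableTopology α] [MeasurableSpace α] [OpensMeasurableSpace α]
    (μ : Measure α) [IsFiniteMeasure μ]
    {g : (ℕ → ℕ) → α} (hg : Continuous g) {F : Set (ℕ → ℕ)} (hF : IsClosed F)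
    {ε : ℝ≥0∞} (hε : ε ≠ 0) :
    ∃ B, MeasurableSet B ∧ B ⊆ g '' F ∧ μ (g '' F \ B) ≤ ε := by
  obtain ⟨δ, hδpos, hδsum⟩ := ENNReal.exists_pos_sum_of_countable hε ℕ
  choose m hm using fun (S : Set (ℕ → ℕ)) (n : ℕ) =>
    exists_measure_image_le_inter_add μ g S n (ENNReal.coe_ne_zero.2 (hδpos n).ne')
  -- shrink `F` one coordinate at a time, losing at most `δ n` of measure at step `n`
  let S : ℕ → Set (ℕ → ℕ) := fun n => Nat.rec F (fun n S => S ∩ {σ | σ n ≤ m S n}) n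
  have hS_succ : ∀ n, S (n + 1) = S n ∩ {σ | σ n ≤ m (S n) n} := fun n => rfl
  have hS_anti : Antitone S := antitone_nat_of_succ_le fun n => by
    rw [hS_succ]; exact inter_subset_left
  have hS_bound : ∀ n, ∀ σ ∈ S n, ∀ i < n, σ i ≤ m (S i) i := fun n σ hσ i hi =>
    (hS_anti (Nat.succ_le_of_lt hi) hσ).2
  have hS_measure : ∀ n, μ (g '' F) ≤ μ (g '' S n) + ∑ i ∈ Finset.range n, (δ i : ℝ≥0∞) := by
    intro n
    induction n with
    | zero => simp [S]
    | succ n ih =>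
      calc μ (g '' F) ≤ μ (g '' S n) + ∑ i ∈ Finset.range n, (δ i : ℝ≥0∞) := ih
        _ ≤ μ (g '' S (n + 1)) + δ n + ∑ i ∈ Finset.range n, (δ i : ℝ≥0∞) := by
          gcongr; exact hm _ _
        _ = μ (g '' S (n + 1)) + ∑ i ∈ Finset.range (n + 1), (δ i : ℝ≥0∞) := by
          rw [Finset.sum_range_succ]; ring
  have hBF : ⋂ n, closure (g '' S n) ⊆ g '' F :=
    iInter_closure_image_subset_image hg hF (fun n => hS_anti (Nat.zero_le n)) _ hS_bound
  have hBmeas : MeasurableSet (⋂ n, closure (g '' S n)) :=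
    .iInter fun n => isClosed_closure.measurableSet
  refine ⟨_, hBmeas, hBF, ?_⟩
  have hanti : Antitone fun n => closure (g '' S n) := fun _ _ h =>
    closure_mono (image_mono (hS_anti h))
  rw [measure_sdiff hBF hBmeas.nullMeasurableSet (measure_ne_top μ _), tsub_le_iff_left,
    hanti.measure_iInter (fun n => isClosed_closure.nullMeasurableSet) ⟨0, measure_ne_top μ _⟩,
    ENNReal.iInf_add]
  refine le_iInf fun n => (hS_measure n).trans (add_le_add (measure_mono subset_closure) ?_)
  exact (ENNReal.sum_le_tsum _).trans hδsum.le

theorem exists_measurableSet_subset_image_measure_diff_eq_zero [TopologicalSpace α] [T2Space α]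
    [FirstCountableTopology α] [MeasurableSpace α] [OpensMeasurableSpace α]
    (μ : Measure α) [IsFiniteMeasure μ] {g : (ℕ → ℕ) → α} (hg : Continuous g)
    {F : Set (ℕ → ℕ)} (hF : IsClosed F) :
    ∃ B, MeasurableSet B ∧ B ⊆ g '' F ∧ μ (g '' F \ B) = 0 := by
  choose B hBmeas hBF hBμ using fun n : ℕ =>
    exists_measurableSet_subset_image_measure_diff_le μ hg hF
      (ENNReal.inv_ne_zero.2 (ENNReal.natCast_ne_top n))
  refine ⟨⋃ n, B n, .iUnion hBmeas, iUnion_subset hBF, ?_⟩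
  refine le_antisymm (ge_of_tendsto' ENNReal.tendsto_inv_nat_nhds_zero fun n => ?_) zero_le
  exact (measure_mono (sdiff_subset_sdiff_right (subset_iUnion B n))).trans (hBμ n)

def prefixCylinder (l : List ℕ) : Set (ℕ → ℕ) := {σ | ∀ i (hi : i < l.length), σ i = l[i]}

theorem prefixCylinder_nil : prefixCylinder [] = univ := by
  simp [prefixCylinder]

theorem isClosed_prefixCylinder (l : List ℕ) : IsClosed (prefixCylinder l) := by
  simp only [prefixCylinder, ofPred_forall]
  exact isClosed_iInter fun i => isClosed_iInter fun _ =>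
    isClosed_eq (continuous_apply i) continuous_const

theorem prefixCylinder_eq_iUnion (l : List ℕ) :
    prefixCylinder l = ⋃ k, prefixCylinder (l ++ [k]) := by
  ext σ
  simp only [prefixCylinder, mem_ofPred_eq, mem_iUnion, List.length_append, List.length_singleton]
  constructor
  · intro h
    refine ⟨σ l.length, fun i hi => ?_⟩
    rcases Nat.lt_succ_iff_lt_or_eq.1 hi with hi | rfl
    · rw [List.getElem_append_left hi]; exact h i hi
    · simp
  · rintro ⟨k, h⟩ i hi
    rw [h i (by omega), List.getElem_append_left hi]

theorem mem_prefixCylinder_ofFn {σ τ : ℕ → ℕ} {n : ℕ} :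
    τ ∈ prefixCylinder (List.ofFn fun i : Fin n => σ i) ↔ ∀ i < n, τ i = σ i := by
  simp [prefixCylinder]

theorem exists_measurable_branch [MeasurableSpace α] {B : List ℕ → Set α}
    (hB : ∀ l, MeasurableSet (B l)) :
    ∃ σ : α → ℕ → ℕ, Measurable σ ∧ ∀ y ∈ B [], (∀ l, y ∈ B l → ∃ k, y ∈ B (l ++ [k])) →
      ∀ n, y ∈ B (List.ofFn fun i : Fin n => σ y i) := by
  classical
  -- the second disjunct makes the search for the next index total
  have hext : ∀ l y, ∃ k, y ∈ B (l ++ [k]) ∨ y ∉ ⋃ j, B (l ++ [j]) := fun l y => by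
    by_cases h : y ∈ ⋃ j, B (l ++ [j])
    · obtain ⟨j, hj⟩ := mem_iUnion.1 h
      exact ⟨j, .inl hj⟩
    · exact ⟨0, .inr h⟩
  let next : List ℕ → α → ℕ := fun l y => Nat.find (hext l y)
  have hnext_meas : ∀ l, Measurable (next l) := fun l =>
    measurable_find (hext l) fun k => (hB _).union (MeasurableSet.iUnion fun j => hB _).compl
  have hnext_mem : ∀ l y k, y ∈ B (l ++ [k]) → y ∈ B (l ++ [next l y]) := fun l y k hk =>
    (Nat.find_spec (hext l y)).resolve_right fun h => h (mem_iUnion.2 ⟨k, hk⟩)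
  let branch : α → ℕ → List ℕ := fun y n => Nat.rec [] (fun _ l => l ++ [next l y]) n
  have hbranch_succ : ∀ y n, branch y (n + 1) = branch y n ++ [next (branch y n) y] :=
    fun _ _ => rfl
  refine ⟨fun y n => next (branch y n) y, ?_, fun y hy hstep n => ?_⟩
  · let _ : MeasurableSpace (List ℕ) := ⊤
    have : DiscreteMeasurableSpace (List ℕ) := ⟨fun _ => trivial⟩
    have hnext_meas₂ : Measurable fun q : α × List ℕ => next q.2 q.1 :=
      measurable_from_prod_countable_left hnext_meas
    have hbranch_meas : ∀ n, Measurable fun y => branch y n := fun n => by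
      induction n with
      | zero => exact measurable_const
      | succ n ih =>
        have hstep_meas : Measurable fun q : α × List ℕ => q.2 ++ [next q.2 q.1] :=
          measurable_from_prod_countable_left fun l =>
            (measurable_from_nat (f := fun k => l ++ [k])).comp (hnext_meas l)
        exact hstep_meas.comp (measurable_id.prodMk ih)
    exact measurable_pi_lambda _ fun n => hnext_meas₂.comp (measurable_id.prodMk (hbranch_meas n))
  · have hbranch_eq : ∀ n, branch y n = List.ofFn fun i : Fin n => next (branch y i) y := by
      intro n
      induction n with
      | zero => rfl
      | succ n ih =>
        rw [hbranch_succ, List.ofFn_succ', List.concat_eq_append]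
        congr 1
    rw [← hbranch_eq]
    induction n with
    | zero => exact hy
    | succ n ih =>
      obtain ⟨k, hk⟩ := hstep _ ih
      exact hnext_mem _ _ _ hk

theorem Continuous.apply_eq_of_forall_exists_agree [TopologicalSpace α] [T2Space α]
    {g : (ℕ → ℕ) → α} (hg : Continuous g) {σ : ℕ → ℕ} {y : α}
    (h : ∀ n, ∃ τ, (∀ i < n, τ i = σ i) ∧ g τ = y) : g σ = y := by
  choose τ hτ hgτ using h
  have hlim : Tendsto τ atTop (𝓝 σ) := tendsto_pi_nhds.2 fun i =>
    tendsto_atTop_of_eventually_const (i₀ := i + 1) fun n hn => hτ n i hn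
  refine tendsto_nhds_unique ((hg.tendsto σ).comp hlim) ?_
  simp only [Function.comp_def, hgτ, tendsto_const_nhds]

theorem Continuous.exists_measurable_section [TopologicalSpace α] [T2Space α]
    [FirstCountableTopology α] [MeasurableSpace α] [OpensMeasurableSpace α]
    (μ : Measure α) [IsFiniteMeasure μ] {g : (ℕ → ℕ) → α} (hg : Continuous g) :
    ∃ G, MeasurableSet G ∧ μ (range g \ G) = 0 ∧
      ∃ s : α → ℕ → ℕ, Measurable s ∧ ∀ y ∈ G, g (s y) = y := by
  choose B hBmeas hBsub hBnull using fun l =>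
    exists_measurableSet_subset_image_measure_diff_eq_zero μ hg (isClosed_prefixCylinder l)
  set Z := toMeasurable μ (⋃ l, g '' prefixCylinder l \ B l)
  have hZ : μ Z = 0 := by
    rw [measure_toMeasurable]
    exact measure_iUnion_null hBnull
  have hmemB : ∀ y ∉ Z, ∀ l, y ∈ g '' prefixCylinder l → y ∈ B l := fun y hy l hl =>
    by_contra fun hB => hy (subset_toMeasurable _ _ (mem_iUnion.2 ⟨l, hl, hB⟩))
  obtain ⟨s, hs, hsB⟩ := exists_measurable_branch hBmeas
  refine ⟨B [] \ Z, (hBmeas _).diff (measurableSet_toMeasurable _ _),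
    measure_mono_null ?_ (measure_union_null (hBnull []) hZ), s, hs, fun y hy => ?_⟩
  · rintro y ⟨hyg, hyG⟩
    by_cases hyZ : y ∈ Z
    · exact .inr hyZ
    · exact .inl ⟨by rwa [prefixCylinder_nil, image_univ], fun hyB => hyG ⟨hyB, hyZ⟩⟩
  have hstep : ∀ l, y ∈ B l → ∃ k, y ∈ B (l ++ [k]) := fun l hl => by
    have : y ∈ ⋃ k, g '' prefixCylinder (l ++ [k]) := by
      rw [← image_iUnion, ← prefixCylinder_eq_iUnion]
      exact hBsub l hl
    obtain ⟨k, hk⟩ := mem_iUnion.1 this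
    exact ⟨k, hmemB y hy.2 _ hk⟩
  refine hg.apply_eq_of_forall_exists_agree fun n => ?_
  obtain ⟨τ, hτ, hgτ⟩ := hBsub _ (hsB y hy.1 hstep n)
  exact ⟨τ, mem_prefixCylinder_ofFn.1 hτ, hgτ⟩

theorem exists_measurableSet_invariant_null_superset_s11 [MeasurableSpace α] {r : α → α → Prop}
    (μ : Measure α)
    (hqi : ∀ A : Set α, MeasurableSet A → μ A = 0 → μ {y | ∃ x ∈ A, r x y} = 0)
    {A : Set α} (hA : μ A = 0) :
    ∃ M, A ⊆ M ∧ MeasurableSet M ∧ μ M = 0 ∧ ∀ x y, x ∈ M → r x y → y ∈ M := by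
  let N : ℕ → Set α := fun n =>
    Nat.rec (toMeasurable μ A) (fun _ N => toMeasurable μ {y | ∃ x ∈ N, r x y}) n
  have hN_meas : ∀ n, MeasurableSet (N n) := fun n => by
    cases n <;> exact measurableSet_toMeasurable _ _
  have hN_null : ∀ n, μ (N n) = 0 := fun n => by
    induction n with
    | zero => rwa [← measure_toMeasurable] at hA
    | succ n ih => exact (measure_toMeasurable _).trans (hqi _ (hN_meas n) ih)
  refine ⟨⋃ n, N n, (subset_toMeasurable μ A).trans (subset_iUnion N 0), .iUnion hN_meas,
    measure_iUnion_null hN_null, fun x y hx hxy => ?_⟩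
  obtain ⟨n, hn⟩ := mem_iUnion.1 hx
  exact mem_iUnion.2 ⟨n + 1, subset_toMeasurable _ _ ⟨x, hn, hxy⟩⟩

end

section Polish

variable {X : Type*} [TopologicalSpace X] [PolishSpace X] [MeasurableSpace X] [BorelSpace X]

theorem exists_measurable_section_saturation (μ : Measure X) [IsFiniteMeasure μ]
    {r : X → X → Prop} (hr : MeasurableSet {p : X × X | r p.1 p.2})
    {C : Set X} (hC : MeasurableSet C) :
    ∃ G, MeasurableSet G ∧ μ ({y | ∃ x ∈ C, r x y} \ G) = 0 ∧
      ∃ t : X → X, Measurable t ∧ ∀ y ∈ G, t y ∈ C ∧ r (t y) y := by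
  have hR : MeasurableSet {p : X × X | p.2 ∈ C ∧ r p.2 p.1} :=
    (hC.preimage measurable_snd).inter (hr.preimage measurable_swap)
  have hR_analytic := hR.analyticSet
  rw [AnalyticSet_def] at hR_analytic
  rcases hR_analytic with hR_empty | ⟨h, hh, hh_range⟩
  · refine ⟨∅, .empty, measure_mono_null (fun y ⟨⟨x, hx, hxy⟩, _⟩ => ?_) measure_empty,
      id, measurable_id, fun y hy => hy.elim⟩
    have hyx : (y, x) ∈ {p : X × X | p.2 ∈ C ∧ r p.2 p.1} := ⟨hx, hxy⟩
    rwa [hR_empty] at hyx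
  · obtain ⟨G, hG, hGnull, s, hs, hsG⟩ :=
      (continuous_fst.comp hh).exists_measurable_section μ
    have hrange : range (Prod.fst ∘ h) = {y | ∃ x ∈ C, r x y} := by
      ext y
      simp [range_comp, hh_range]
    refine ⟨G, hG, hrange ▸ hGnull, fun y => (h (s y)).2,
      measurable_snd.comp (hh.measurable.comp hs), fun y hy => ?_⟩
    have hmem : h (s y) ∈ {p : X × X | p.2 ∈ C ∧ r p.2 p.1} := hh_range ▸ mem_range_self _
    have hfst : (h (s y)).1 = y := hsG y hy
    exact ⟨hmem.1, by simpa only [hfst] using hmem.2⟩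

theorem exists_invariant_measurable_section {E : X → X → Prop} (hE : Equivalence E)
    (hEmeas : MeasurableSet {p : X × X | E p.1 p.2}) (μ : Measure X) [IsFiniteMeasure μ]
    (hqi : ∀ A : Set X, MeasurableSet A → μ A = 0 → μ {y | ∃ x ∈ A, E x y} = 0)
    {C : Set X} (hC : MeasurableSet C) :
    ∃ T, MeasurableSet T ∧ (∀ x y, x ∈ T → E x y → y ∈ T) ∧ μ (C \ T) = 0 ∧
      ∃ t : X → X, Measurable t ∧ ∀ y ∈ T, t y ∈ C ∧ E (t y) y := by
  obtain ⟨G, hG, hGnull, t, ht, htG⟩ := exists_measurable_section_saturation μ hEmeas hC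
  obtain ⟨M, hGM, hM, hMnull, hMinv⟩ := exists_measurableSet_invariant_null_superset_s11 μ hqi hGnull
  have hmemG : ∀ y, (∃ x ∈ C, E x y) → y ∉ M → y ∈ G := fun y hy hyM =>
    by_contra fun hyG => hyM (hGM ⟨hy, hyG⟩)
  refine ⟨G \ M, hG.diff hM, fun x y hx hxy => ?_, measure_mono_null (fun c hc => ?_) hMnull,
    t, ht, fun y hy => htG y hy.1⟩
  · have hyM : y ∉ M := fun hyM => hx.2 (hMinv y x hyM (hE.symm hxy))
    obtain ⟨htxC, htx⟩ := htG x hx.1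
    exact ⟨hmemG y ⟨t x, htxC, hE.trans htx hxy⟩ hyM, hyM⟩
  · by_contra hcM
    exact hc.2 ⟨hmemG c ⟨c, hc.1, hE.refl c⟩ hcM, hcM⟩

end Polish

theorem reduction_comp_of_forall_rel {X Y : Type*} {E : X → X → Prop} (hE : Equivalence E)
    {F : Y → Y → Prop} {C T : Set X} {f : X → Y}
    (hf : ∀ x ∈ C, ∀ x' ∈ C, (E x x' ↔ F (f x) (f x'))) {t : X → X}
    (ht : ∀ y ∈ T, t y ∈ C ∧ E (t y) y) :
    ∀ y ∈ T, ∀ y' ∈ T, (E y y' ↔ F (f (t y)) (f (t y'))) := by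
  intro y hy y' hy'
  obtain ⟨hty, hy⟩ := ht y hy
  obtain ⟨hty', hy'⟩ := ht y' hy'
  rw [← hf _ hty _ hty']
  exact ⟨fun h => hE.trans hy (hE.trans h (hE.symm hy')),
    fun h => hE.trans (hE.symm hy) (hE.trans h hy')⟩

theorem stmt_11_general {X Y : Type*} [TopologicalSpace X] [PolishSpace X]
    [MeasurableSpace X] [BorelSpace X]
    [MeasurableSpace Y]
    (E : X → X → Prop) (hEeq : Equivalence E)
    (hEmeas : MeasurableSet {p : X × X | E p.1 p.2})
    (F : Y → Y → Prop)
    (μ : Measure X) [IsProbabilityMeasure μ]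
    (hqi : ∀ A : Set X, MeasurableSet A → μ A = 0 → μ {y | ∃ x ∈ A, E x y} = 0)
    (herg : ∀ B : Set X, MeasurableSet B → (∀ x y, x ∈ B → E x y → y ∈ B) →
      μ B = 0 ∨ μ Bᶜ = 0) :
    (∃ C : Set X, MeasurableSet C ∧ μ Cᶜ = 0 ∧
      ∃ f : X → Y, Measurable f ∧ ∀ x ∈ C, ∀ x' ∈ C, (E x x' ↔ F (f x) (f x'))) ↔
    (∃ C : Set X, MeasurableSet C ∧ μ C ≠ 0 ∧
      ∃ f : X → Y, Measurable f ∧ ∀ x ∈ C, ∀ x' ∈ C, (E x x' ↔ F (f x) (f x'))) := by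
  constructor
  · rintro ⟨C, hC, hCc, f, hf, hred⟩
    exact ⟨C, hC, by simp [(prob_compl_eq_zero_iff hC).1 hCc], f, hf, hred⟩
  · rintro ⟨C, hC, hCpos, f, hf, hred⟩
    obtain ⟨T, hT, hTinv, hCT, t, ht, htT⟩ :=
      exists_invariant_measurable_section hEeq hEmeas μ hqi hC
    have hTpos : μ T ≠ 0 := fun hT0 =>
      hCpos (measure_mono_null (sdiff_subset_iff.1 subset_rfl) (measure_union_null hT0 hCT))
    exact ⟨T, hT, (herg T hT hTinv).resolve_left hTpos, f ∘ t, hf.comp ht,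
      reduction_comp_of_forall_rel hEeq hred htT⟩

/-- For an `E`-quasi-invariant `E`-ergodic measure, `μ`-reducibility of `E`
to `F` is equivalent to `μ`-somewhere reducibility. -/
theorem stmt_11 {X Y : Type*} [TopologicalSpace X] [PolishSpace X]
    [MeasurableSpace X] [BorelSpace X]
    [TopologicalSpace Y] [PolishSpace Y] [MeasurableSpace Y] [BorelSpace Y]
    (E : X → X → Prop) (hEeq : Equivalence E)
    (hEmeas : MeasurableSet {p : X × X | E p.1 p.2})
    (hEcount : ∀ x : X, {y | E x y}.Countable)
    (F : Y → Y → Prop) (hFeq : Equivalence F)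
    (hFmeas : MeasurableSet {p : Y × Y | F p.1 p.2})
    (hFcount : ∀ y : Y, {z | F y z}.Countable)
    (μ : Measure X) [IsProbabilityMeasure μ]
    (hqi : ∀ A : Set X, MeasurableSet A → μ A = 0 → μ {y | ∃ x ∈ A, E x y} = 0)
    (herg : ∀ B : Set X, MeasurableSet B → (∀ x y, x ∈ B → E x y → y ∈ B) →
      μ B = 0 ∨ μ Bᶜ = 0) :
    (∃ C : Set X, MeasurableSet C ∧ μ Cᶜ = 0 ∧
      ∃ f : X → Y, Measurable f ∧ ∀ x ∈ C, ∀ x' ∈ C, (E x x' ↔ F (f x) (f x'))) ↔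
    (∃ C : Set X, MeasurableSet C ∧ μ C ≠ 0 ∧
      ∃ f : X → Y, Measurable f ∧ ∀ x ∈ C, ∀ x' ∈ C, (E x x' ↔ F (f x) (f x'))) :=
  stmt_11_general E hEeq hEmeas F μ hqi herg
end

section
/- Let X be a Polish space and E the orbit equivalence relation of a Borel action of a countable group Γ on X. Suppose T₀ : X → X is a Borel automorphism with graph contained in E whose orbit equivalence relation E₀ is aperiodic. If G is an acyclic Borel graph contained in E containing the graph of T₀, and L ⊆ E is an antisymmetric irreflexive Borel set disjoint from the graph of T₀^{±1} such that every point has in-degree and out-degree exactly one in L, then, letting T₁ be the Borel automorphism with graph L, the action of the free group F₂ = ⟨a, b⟩ on X defined by a·x = T₀(x), b·x = T₁(x) is free, provided that the graph generated by the graphs of T₀ and T₁ (i.e., symmetrizations of their graphs) is contained in an acyclic graph. -/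
open MeasureTheory

/-- A graph (set of edges) on `X` is acyclic if it admits no cycle: a sequence
`x 0, …, x n` with `n ≥ 3`, consecutive points adjacent, `x 0, …, x (n-1)` injective,
and `x n = x 0`. -/
def IsAcyclicGraph {X : Type*} (G : Set (X × X)) : Prop :=
  ¬ ∃ (n : ℕ) (x : ℕ → X), 3 ≤ n ∧ (∀ i < n, (x i, x (i + 1)) ∈ G) ∧
    Set.InjOn x (Set.Iio n) ∧ x n = x 0

/-!
Read the word `g` from right to left: its letters move `x` along a walk whose steps are edges of
the acyclic graph `H`. Since the graphs of `T₀^{±1}` and `T₁^{±1}` are pairwise disjoint, two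
consecutive letters can only send a point back to itself when they cancel, which a reduced word
forbids. So the walk never backtracks, and in an acyclic graph such a walk cannot be closed.
-/

open Function

theorem Equiv.Perm.pow_apply_ne_self_of_infinite {X : Type*} {σ : Equiv.Perm X} {x : X}
    (hσ : {y | ∃ n : ℤ, (σ ^ n) x = y}.Infinite) {n : ℕ} (hn : 0 < n) : (σ ^ n) x ≠ x := by
  intro hfix
  refine hσ (((Set.finite_Ico (0 : ℤ) n).image fun r => (σ ^ r) x).subset ?_)
  rintro _ ⟨m, rfl⟩
  have hn' : (n : ℤ) ≠ 0 := by exact_mod_cast hn.ne'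
  refine ⟨m % n, ⟨Int.emod_nonneg m hn', Int.emod_lt_of_pos m (by omega)⟩, ?_⟩
  conv_rhs => rw [← Int.emod_add_mul_ediv m n, zpow_add, zpow_mul, zpow_natCast]
  rw [Equiv.Perm.mul_apply, Equiv.Perm.zpow_apply_eq_self_of_apply_eq_self hfix]

theorem IsAcyclicGraph.last_ne_first_of_nonbacktracking {X : Type*} {H : Set (X × X)}
    (hH : IsAcyclicGraph H) (hirr : ∀ x, (x, x) ∉ H) {k : ℕ} (hk : 1 ≤ k) {y : ℕ → X}
    (hedge : ∀ i < k, (y i, y (i + 1)) ∈ H) (hnb : ∀ i, i + 2 ≤ k → y (i + 2) ≠ y i) :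
    y k ≠ y 0 := by
  induction k using Nat.strong_induction_on generalizing y with
  | _ k ih =>
  intro hclosed
  by_cases hinj : Set.InjOn y (Set.Iio k)
  · obtain rfl | rfl | h3 : k = 1 ∨ k = 2 ∨ 3 ≤ k := by omega
    · exact hirr (y 0) (hclosed ▸ hedge 0 one_pos)
    · exact hnb 0 le_rfl hclosed
    · exact hH ⟨k, y, h3, hedge, hinj, hclosed⟩
  -- A repetition `y i = y j` inside the walk closes up a strictly shorter one.
  have hshort : ∀ i j, i < j → j < k → y j ≠ y i := fun i j hij hjk => by
    have := ih (j - i) (by omega) (by omega) (y := fun m => y (i + m))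
      (fun m hm => hedge (i + m) (by omega)) (fun m hm => hnb (i + m) (by omega))
    simpa [Nat.add_sub_cancel' hij.le] using this
  simp only [Set.InjOn, Set.mem_Iio, not_forall] at hinj
  obtain ⟨i, hi, j, hj, hij, hne⟩ := hinj
  rcases Nat.lt_or_gt_of_ne hne with h | h
  · exact hshort i j h hj hij.symm
  · exact hshort j i h hi hij

section FreeGroup

variable {α X : Type*}

def letterPerm (f : α → Equiv.Perm X) (p : α × Bool) : Equiv.Perm X :=
  cond p.2 (f p.1) (f p.1)⁻¹

theorem letterPerm_flip (f : α → Equiv.Perm X) (p : α × Bool) :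
    letterPerm f (p.1, !p.2) = (letterPerm f p)⁻¹ := by
  cases p with | mk i b => cases b <;> simp [letterPerm]

theorem FreeGroup.lift_eq_prod_toWord [DecidableEq α] (f : α → Equiv.Perm X) (g : FreeGroup α) :
    FreeGroup.lift f g = (g.toWord.map (letterPerm f)).prod := by
  conv_lhs => rw [← FreeGroup.mk_toWord (x := g), FreeGroup.lift_mk]
  rfl

theorem letterPerm_apply_letterPerm_apply_ne (f : α → Equiv.Perm X) {p q : α × Bool} {z : X}
    (hinj : Injective fun r => letterPerm f r z) (hpq : q.1 = p.1 → q.2 = p.2) :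
    letterPerm f q (letterPerm f p z) ≠ z := by
  intro h
  have hp : p = (q.1, !q.2) := hinj <| by
    simp only [letterPerm_flip, Equiv.Perm.inv_def, Equiv.eq_symm_apply, h]
  cases q
  subst hp
  simp at hpq

theorem letterPerm_apply_mem (f : α → Equiv.Perm X) {H : Set (X × X)}
    (hsymm : ∀ x y, (x, y) ∈ H → (y, x) ∈ H) (hedge : ∀ i x, (x, f i x) ∈ H)
    (p : α × Bool) (z : X) : (letterPerm f p z, z) ∈ H := by
  cases p with
  | mk i b =>
    cases b
    · simpa [letterPerm] using hedge i ((f i)⁻¹ z)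
    · exact hsymm _ _ (hedge i z)

theorem FreeGroup.lift_apply_ne_self_of_isAcyclicGraph [DecidableEq α] (f : α → Equiv.Perm X)
    {H : Set (X × X)} (hH : IsAcyclicGraph H) (hsymm : ∀ x y, (x, y) ∈ H → (y, x) ∈ H)
    (hirr : ∀ x, (x, x) ∉ H) (hedge : ∀ i x, (x, f i x) ∈ H)
    (hdisj : ∀ x, Injective fun p => letterPerm f p x) {g : FreeGroup α} (hg : g ≠ 1) (x : X) :
    FreeGroup.lift f g x ≠ x := by
  set w := g.toWord with hw
  let y : ℕ → X := fun m => ((w.drop m).map (letterPerm f)).prod x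
  have hy : ∀ m (hm : m < w.length), y m = letterPerm f w[m] (y (m + 1)) := fun m hm => by
    simp only [y, List.drop_eq_getElem_cons hm, List.map_cons, List.prod_cons,
      Equiv.Perm.mul_apply]
  have hred : FreeGroup.IsReduced w := FreeGroup.isReduced_toWord
  have hlen : 1 ≤ w.length :=
    List.length_pos_iff.2 fun h => hg (FreeGroup.toWord_eq_nil_iff.1 h)
  have hy0 : y 0 = FreeGroup.lift f g x := by
    simp [y, FreeGroup.lift_eq_prod_toWord, hw]
  have hyk : y w.length = x := by
    simp only [y, List.drop_length, List.map_nil, List.prod_nil, Equiv.Perm.one_apply]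
  rw [← hy0, ← hyk]
  refine (hH.last_ne_first_of_nonbacktracking hirr hlen (fun m hm => ?_) fun m hm => ?_).symm
  · rw [hy m hm]
    exact letterPerm_apply_mem f hsymm hedge _ _
  · rw [hy m (by omega), hy (m + 1) (by omega)]
    exact (letterPerm_apply_letterPerm_apply_ne f (hdisj _) (hred.getElem m (by omega))).symm

end FreeGroup

theorem injective_letterPerm_fin_two {X : Type*} {T₀ T₁ : Equiv.Perm X}
    (h₀ : ∀ x, T₀ (T₀ x) ≠ x) (h₁ : ∀ x, T₁ (T₁ x) ≠ x) (h₀₁ : ∀ x, T₀ x ≠ T₁ x)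
    (h₁₀ : ∀ x, T₁ (T₀ x) ≠ x) (x : X) :
    Injective fun p => letterPerm (fun i : Fin 2 => if i = 0 then T₀ else T₁) p x := by
  have h₀' (x : X) : T₀.symm x ≠ T₀ x := fun h => h₀ x (by rw [← h, Equiv.apply_symm_apply])
  have h₁' (x : X) : T₁.symm x ≠ T₁ x := fun h => h₁ x (by rw [← h, Equiv.apply_symm_apply])
  have h₀₁' (x : X) : T₀.symm x ≠ T₁.symm x := fun h =>
    h₀₁ (T₀.symm x) (by rw [Equiv.apply_symm_apply, h, Equiv.apply_symm_apply])
  have h₀₁'' (x : X) : T₀.symm x ≠ T₁ x := fun h =>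
    h₁₀ (T₀.symm x) (by rw [Equiv.apply_symm_apply, h])
  have h₁₀' (x : X) : T₀ x ≠ T₁.symm x := fun h => h₁₀ x (by rw [h, Equiv.apply_symm_apply])
  rintro ⟨i, b⟩ ⟨j, c⟩ h
  fin_cases i <;> fin_cases j <;> cases b <;> cases c <;>
    simp [letterPerm, h₀', h₁', h₀₁, h₀₁', h₀₁'', h₁₀', (h₀' _).symm, (h₁' _).symm,
      (h₀₁ _).symm, (h₀₁' _).symm, (h₀₁'' _).symm, (h₁₀' _).symm] at h ⊢

theorem stmt_17_general {X : Type*}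
    (T₀ T₁ : Equiv.Perm X)
    (haper : ∀ x : X, {y | ∃ n : ℤ, (T₀ ^ n) x = y}.Infinite)
    (L : Set (X × X))
    (hLanti : ∀ x y, (x, y) ∈ L → (y, x) ∉ L)
    (hLdisj : ∀ x, (x, T₀ x) ∉ L ∧ (T₀ x, x) ∉ L)
    (hT₁L : ∀ x y, T₁ x = y ↔ (x, y) ∈ L)
    (hacyclic : ∃ H : Set (X × X), IsAcyclicGraph H ∧
      (∀ x y, (x, y) ∈ H → (y, x) ∈ H) ∧ (∀ x, (x, x) ∉ H) ∧
      ∀ x, (x, T₀ x) ∈ H ∧ (x, T₁ x) ∈ H) :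
    ∀ g : FreeGroup (Fin 2), g ≠ 1 →
      ∀ x : X, (FreeGroup.lift (fun i : Fin 2 => if i = 0 then T₀ else T₁) g) x ≠ x := by
  obtain ⟨H, hH, hsymm, hirr, hT⟩ := hacyclic
  have h₀ (x : X) : T₀ (T₀ x) ≠ x := by
    simpa [sq] using Equiv.Perm.pow_apply_ne_self_of_infinite (haper x) two_pos
  have h₁ (x : X) : T₁ (T₁ x) ≠ x := fun h =>
    hLanti _ _ ((hT₁L _ _).1 rfl) ((hT₁L _ _).1 h)
  have h₀₁ (x : X) : T₀ x ≠ T₁ x := fun h => (hLdisj x).1 ((hT₁L _ _).1 h.symm)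
  have h₁₀ (x : X) : T₁ (T₀ x) ≠ x := fun h => (hLdisj x).2 ((hT₁L _ _).1 h)
  intro g hg x
  refine FreeGroup.lift_apply_ne_self_of_isAcyclicGraph _ hH hsymm hirr (fun i z => ?_)
    (injective_letterPerm_fin_two h₀ h₁ h₀₁ h₁₀) hg x
  fin_cases i
  exacts [(hT z).1, (hT z).2]

/-- If `T₀` generates an aperiodic equivalence relation, its graph lies in an
acyclic Borel graph `G ⊆ E`, and `L ⊆ E` is an irreflexive antisymmetric Borel set, disjoint
from the graphs of `T₀` and `T₀⁻¹`, which is the graph of an automorphism `T₁` (every point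
having in- and out-degree exactly one), then—provided the symmetrized graphs of `T₀` and
`T₁` lie in an acyclic graph—the action of the free group `F₂` sending the generators to
`T₀` and `T₁` is free. -/
theorem stmt_17 {X : Type*} [TopologicalSpace X] [PolishSpace X]
    [MeasurableSpace X] [BorelSpace X]
    (Γ : Type*) [Group Γ] [Countable Γ]
    (a : Γ → X → X) (ha : ∀ γ, Measurable (a γ))
    (hone : ∀ x, a 1 x = x) (hmul : ∀ γ δ x, a (γ * δ) x = a γ (a δ x))
    (E : X → X → Prop) (hE : ∀ x y, E x y ↔ ∃ γ, a γ x = y)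
    (T₀ T₁ : Equiv.Perm X)
    (hT₀ : Measurable ⇑T₀) (hT₀' : Measurable ⇑T₀.symm)
    (hT₁ : Measurable ⇑T₁) (hT₁' : Measurable ⇑T₁.symm)
    (hT₀E : ∀ x, E x (T₀ x))
    (haper : ∀ x : X, {y | ∃ n : ℤ, (T₀ ^ n) x = y}.Infinite)
    (G : Set (X × X)) (hGmeas : MeasurableSet G)
    (hGsymm : ∀ x y, (x, y) ∈ G → (y, x) ∈ G)
    (hGirr : ∀ x, (x, x) ∉ G)
    (hGE : ∀ p ∈ G, E p.1 p.2)
    (hGacyclic : IsAcyclicGraph G)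
    (hT₀G : ∀ x, (x, T₀ x) ∈ G)
    (L : Set (X × X)) (hLmeas : MeasurableSet L)
    (hLE : ∀ p ∈ L, E p.1 p.2)
    (hLirr : ∀ x, (x, x) ∉ L)
    (hLanti : ∀ x y, (x, y) ∈ L → (y, x) ∉ L)
    (hLdisj : ∀ x, (x, T₀ x) ∉ L ∧ (T₀ x, x) ∉ L)
    (hLout : ∀ x, ∃! y, (x, y) ∈ L)
    (hLin : ∀ y, ∃! x, (x, y) ∈ L)
    (hT₁L : ∀ x y, T₁ x = y ↔ (x, y) ∈ L)
    (hacyclic : ∃ H : Set (X × X), IsAcyclicGraph H ∧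
      (∀ x y, (x, y) ∈ H → (y, x) ∈ H) ∧ (∀ x, (x, x) ∉ H) ∧
      ∀ x, (x, T₀ x) ∈ H ∧ (x, T₁ x) ∈ H) :
    ∀ g : FreeGroup (Fin 2), g ≠ 1 →
      ∀ x : X, (FreeGroup.lift (fun i : Fin 2 => if i = 0 then T₀ else T₁) g) x ≠ x :=
  stmt_17_general T₀ T₁ haper L hLanti hLdisj hT₁L hacyclic
end
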